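/- arXiv:1804.05007 — 6 statements merged into one kernel-verified Lean document; each statement's English description precedes it below -/
import Mathlib

section
/- Let n be a positive integer and let i, j, k be integers with 0 ≤ i, j, k ≤ n. Fix a ±1 sequence W of length n with Hamming weight ω(W) = n - k. Then the number of ordered pairs (X, Y) of ±1 sequences of length n with ω(X) = n - i, ω(Y) = n - j, and pointwise product X·Y = W equals 0 if i + j - k is odd, and equals C(k, (j - i + k)/2) · C(n - k, (j + i - k)/2) if i + j - k is even (where a binomial coefficient C(p, q) is taken to be 0 when q < 0 or q > p). -/
/-- A ±1 sequence of length `n`. -/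
def IsPM (n : ℕ) (X : ZMod n → ℤ) : Prop := ∀ i, X i = 1 ∨ X i = -1

/-- The Hamming weight: the number of indices where the sequence is `1`. -/
noncomputable def wt (n : ℕ) (X : ZMod n → ℤ) : ℕ := {i | X i = 1}.ncard

/-- Binomial coefficient with integer arguments, equal to `0` when `q < 0` or `q > p`. -/
def intChoose (p q : ℤ) : ℕ := if 0 ≤ q ∧ q ≤ p then p.toNat.choose q.toNat else 0

lemma countFinsets {ι : Type*} [Fintype ι] [DecidableEq ι] (T : Finset ι) (a b : ℕ) :
    (Finset.univ.filter fun A : Finset ι => (A ∩ T).card = b ∧ (A \ T).card = a).card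
      = T.card.choose b * Tᶜ.card.choose a := by
  rw [← Finset.card_powersetCard, ← Finset.card_powersetCard, ← Finset.card_product]
  apply Finset.card_bij' (fun A _ => (A ∩ T, A \ T)) (fun p _ => p.1 ∪ p.2)
  · intro A hA
    simp only [Finset.mem_filter] at hA
    simp only [Finset.mem_product, Finset.mem_powersetCard]
    refine ⟨⟨Finset.inter_subset_right, hA.2.1⟩, ⟨?_, hA.2.2⟩⟩
    intro x hx
    simp only [Finset.mem_sdiff] at hx
    simp [hx.2]
  · intro p hp
    simp only [Finset.mem_product, Finset.mem_powersetCard] at hp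
    simp only [Finset.mem_filter, Finset.mem_univ, true_and]
    have h1 : p.2 ∩ T = ∅ := by
      ext x
      simp only [Finset.mem_inter, Finset.notMem_empty, iff_false, not_and]
      intro hx; have := hp.2.1 hx; simp at this; exact this
    constructor
    · rw [Finset.union_inter_distrib_right, Finset.inter_eq_left.mpr hp.1.1, h1,
        Finset.union_empty, hp.1.2]
    · rw [Finset.union_sdiff_distrib, Finset.sdiff_eq_empty_iff_subset.mpr hp.1.1,
        Finset.empty_union]
      rw [Finset.sdiff_eq_self_iff_disjoint.mpr, hp.2.2]
      rw [Finset.disjoint_left]; intro x hx; have := hp.2.1 hx; simp at this; exact this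
  · intro A hA
    rw [Finset.union_comm]; exact Finset.sdiff_union_inter A T
  · intro p hp
    simp only [Finset.mem_product, Finset.mem_powersetCard] at hp
    have h1 : p.2 ∩ T = ∅ := by
      ext x
      simp only [Finset.mem_inter, Finset.notMem_empty, iff_false, not_and]
      intro hx; have := hp.2.1 hx; simp at this; exact this
    ext1
    · rw [Finset.union_inter_distrib_right, Finset.inter_eq_left.mpr hp.1.1, h1,
        Finset.union_empty]
    · rw [Finset.union_sdiff_distrib, Finset.sdiff_eq_empty_iff_subset.mpr hp.1.1,
        Finset.empty_union]
      rw [Finset.sdiff_eq_self_iff_disjoint.mpr]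
      rw [Finset.disjoint_left]; intro x hx; have := hp.2.1 hx; simp at this; exact this

theorem stmt0 (n : ℕ) (hn : 0 < n) (i j k : ℤ)
    (hi : 0 ≤ i ∧ i ≤ n) (hj : 0 ≤ j ∧ j ≤ n) (hk : 0 ≤ k ∧ k ≤ n)
    (W : ZMod n → ℤ) (hW : IsPM n W) (hWwt : (wt n W : ℤ) = n - k) :
    {p : (ZMod n → ℤ) × (ZMod n → ℤ) |
        IsPM n p.1 ∧ IsPM n p.2 ∧ (wt n p.1 : ℤ) = n - i ∧ (wt n p.2 : ℤ) = n - j ∧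
        (fun t => p.1 t * p.2 t) = W}.ncard =
      if Odd (i + j - k) then 0
      else intChoose k ((j - i + k) / 2) * intChoose ((n : ℤ) - k) ((j + i - k) / 2) := by
  haveI : NeZero n := ⟨hn.ne'⟩
  classical
  have wt_eq : ∀ X : ZMod n → ℤ, wt n X = (Finset.univ.filter fun t => X t = 1).card := by
    intro X
    rw [wt, ← Set.ncard_coe_finset]
    congr 1
    ext t; simp
  have card_split : ∀ X : ZMod n → ℤ, IsPM n X →
      (Finset.univ.filter fun t => X t = 1).card
        + (Finset.univ.filter fun t => X t = -1).card = n := by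
    intro X hX
    rw [← Finset.card_union_of_disjoint]
    · have h1 : (Finset.univ.filter fun t => X t = 1) ∪ (Finset.univ.filter fun t => X t = -1)
          = Finset.univ := by
        ext t
        simp only [Finset.mem_union, Finset.mem_filter, Finset.mem_univ, true_and, iff_true]
        exact hX t
      rw [h1, Finset.card_univ, ZMod.card]
    · rw [Finset.disjoint_left]
      intro t ht1 ht2
      simp only [Finset.mem_filter, Finset.mem_univ, true_and] at ht1 ht2
      rw [ht1] at ht2; norm_num at ht2
  set T : Finset (ZMod n) := Finset.univ.filter (fun t => W t = -1) with hT
  have hTcard : (T.card : ℤ) = k := by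
    have h1 := card_split W hW
    rw [← hT] at h1
    have h2 : (wt n W : ℤ) = n - k := hWwt
    rw [wt_eq W] at h2
    omega
  set g : Finset (ZMod n) → (ZMod n → ℤ) × (ZMod n → ℤ) :=
    fun A => (fun t => if t ∈ A then -1 else 1, fun t => (if t ∈ A then (-1:ℤ) else 1) * W t)
    with hg
  set FS : Finset (Finset (ZMod n)) := Finset.univ.filter
    (fun A : Finset (ZMod n) => ((A ∩ T).card : ℤ) + ((A \ T).card : ℤ) = i ∧
      ((A \ T).card : ℤ) + ((T.card : ℤ) - ((A ∩ T).card : ℤ)) = j) with hFS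
  have hginj : Function.Injective g := by
    intro A B h
    ext t
    have h1 := congrFun (congrArg Prod.fst h) t
    simp only [hg] at h1
    by_cases hA : t ∈ A <;> by_cases hB : t ∈ B <;> simp [hA, hB] at h1 ⊢ <;> norm_num at h1
  have hPg : {p : (ZMod n → ℤ) × (ZMod n → ℤ) |
        IsPM n p.1 ∧ IsPM n p.2 ∧ (wt n p.1 : ℤ) = n - i ∧ (wt n p.2 : ℤ) = n - j ∧
        (fun t => p.1 t * p.2 t) = W} = ↑(FS.image g) := by
    ext p
    simp only [Set.mem_setOf_eq, Finset.coe_image, Set.mem_image, Finset.mem_coe,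
      Finset.mem_filter, Finset.mem_univ, true_and, hFS]
    constructor
    · rintro ⟨hX, hY, hwX, hwY, hprod⟩
      set X := p.1 with hXdef
      set Y := p.2 with hYdef
      have hY_eq : Y = fun t => X t * W t := by
        funext t
        have hx2 : X t * X t = 1 := by rcases hX t with h | h <;> rw [h] <;> ring
        have hp := congrFun hprod t
        calc Y t = (X t * X t) * Y t := by rw [hx2]; ring
        _ = X t * (X t * Y t) := by ring
        _ = X t * W t := by rw [hp]
      refine ⟨Finset.univ.filter (fun t => X t = -1), ?_, ?_⟩
      · set A : Finset (ZMod n) := Finset.univ.filter (fun t => X t = -1) with hA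
        have hXsplit := card_split X hX
        rw [← hA] at hXsplit
        rw [wt_eq X] at hwX
        have hAcard : ((A.card : ℤ)) = i := by omega
        have hsplitA : (A ∩ T).card + (A \ T).card = A.card :=
          Finset.card_inter_add_card_sdiff A T
        have hYneg : (Finset.univ.filter fun t => Y t = -1) = (A \ T) ∪ (T \ A) := by
          ext t
          simp only [Finset.mem_filter, Finset.mem_univ, true_and, Finset.mem_union,
            Finset.mem_sdiff, hA, hT, hY_eq]
          rcases hX t with h | h <;> rcases hW t with h' | h' <;> norm_num [h, h']
        have hYsplit := card_split Y hY
        rw [hYneg] at hYsplit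
        rw [wt_eq Y] at hwY
        have hYcard : (((A \ T) ∪ (T \ A)).card : ℤ) = j := by omega
        have hdisj : Disjoint (A \ T) (T \ A) := disjoint_sdiff_sdiff
        rw [Finset.card_union_of_disjoint hdisj] at hYcard
        have hsplitT : (T ∩ A).card + (T \ A).card = T.card :=
          Finset.card_inter_add_card_sdiff T A
        have hcomm : (T ∩ A).card = (A ∩ T).card := by rw [Finset.inter_comm]
        push_cast at hYcard ⊢
        constructor <;> omega
      · have hgX : (fun t => if t ∈ Finset.univ.filter (fun t => X t = -1) then (-1:ℤ) else 1)
            = X := by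
          funext t
          simp only [Finset.mem_filter, Finset.mem_univ, true_and]
          rcases hX t with h | h <;> simp [h]
        simp only [hg]
        ext t
        · exact congrFun hgX t
        · simp only
          rw [congrFun hgX t]
          exact (congrFun hY_eq t).symm
    · rintro ⟨A, ⟨hA1, hA2⟩, rfl⟩
      have hsplitA : (A ∩ T).card + (A \ T).card = A.card :=
        Finset.card_inter_add_card_sdiff A T
      have hAcard : ((A.card : ℤ)) = i := by push_cast at hA1; omega
      have hAn : A.card ≤ n := by
        have := Finset.card_le_univ A
        rwa [ZMod.card] at this
      have hX : IsPM n (g A).1 := by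
        intro t; by_cases h : t ∈ A <;> simp [hg, h]
      have hY : IsPM n (g A).2 := by
        intro t; rcases hW t with h | h <;> by_cases h2 : t ∈ A <;> simp [hg, h, h2]
      refine ⟨hX, hY, ?_, ?_, ?_⟩
      · rw [wt_eq]
        have heq : (Finset.univ.filter fun t => (g A).1 t = 1) = Aᶜ := by
          ext t
          simp only [Finset.mem_filter, Finset.mem_univ, true_and, Finset.mem_compl, hg]
          by_cases h : t ∈ A <;> simp [h]
        rw [heq, Finset.card_compl, ZMod.card]
        omega
      · have hsplit := card_split _ hY
        rw [wt_eq]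
        have hYneg : (Finset.univ.filter fun t => (g A).2 t = -1) = (A \ T) ∪ (T \ A) := by
          ext t
          simp only [Finset.mem_filter, Finset.mem_univ, true_and, Finset.mem_union,
            Finset.mem_sdiff, hg, hT]
          rcases hW t with h' | h' <;> by_cases h : t ∈ A <;> norm_num [h, h']
        rw [hYneg] at hsplit
        have hdisj : Disjoint (A \ T) (T \ A) := disjoint_sdiff_sdiff
        rw [Finset.card_union_of_disjoint hdisj] at hsplit
        have hsplitT : (T ∩ A).card + (T \ A).card = T.card :=
          Finset.card_inter_add_card_sdiff T A
        have hcomm : (T ∩ A).card = (A ∩ T).card := by rw [Finset.inter_comm]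
        omega
      · funext t
        simp only [hg]
        by_cases h : t ∈ A <;> simp [h]
  rw [hPg, Set.ncard_coe_finset, Finset.card_image_of_injective _ hginj]
  by_cases hodd : Odd (i + j - k)
  · rw [if_pos hodd]
    have hFSe : FS = ∅ := by
      rw [Finset.eq_empty_iff_forall_notMem]
      intro A hA
      simp only [hFS, Finset.mem_filter, Finset.mem_univ, true_and] at hA
      obtain ⟨m, hm⟩ := hodd
      omega
    rw [hFSe, Finset.card_empty]
  · rw [if_neg hodd]
    have heven : Even (i + j - k) := Int.not_odd_iff_even.mp hodd
    obtain ⟨m, hm⟩ := heven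
    have hTcc : ((Tᶜ.card : ℤ)) = n - k := by
      rw [Finset.card_compl, ZMod.card]
      have hle : T.card ≤ n := by
        have := Finset.card_le_univ T
        rwa [ZMod.card] at this
      omega
    have hd1 : (j + i - k) / 2 = m := by omega
    have hd2 : (j - i + k) / 2 = k - (i - m) := by omega
    rw [hd1, hd2]
    by_cases hpos : 0 ≤ m ∧ 0 ≤ i - m
    · obtain ⟨hm1, hm2⟩ := hpos
      have hFSeq : FS = Finset.univ.filter
          (fun A : Finset (ZMod n) => (A ∩ T).card = (i - m).toNat ∧ (A \ T).card = m.toNat) := by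
        ext A
        simp only [hFS, Finset.mem_filter, Finset.mem_univ, true_and]
        omega
      rw [hFSeq, countFinsets]
      unfold intChoose
      by_cases hc1 : i - m ≤ k
      · rw [if_pos ⟨by omega, by omega⟩]
        by_cases hc2 : m ≤ (n : ℤ) - k
        · rw [if_pos ⟨hm1, hc2⟩]
          have hk1 : T.card = k.toNat := by omega
          have hk2 : Tᶜ.card = ((n : ℤ) - k).toNat := by omega
          rw [hk1, hk2]
          congr 1
          have h1 : (k - (i - m)).toNat = k.toNat - (i - m).toNat := by omega
          rw [h1]
          exact (Nat.choose_symm (by omega)).symm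
        · rw [if_neg (by omega)]
          have hlt : Tᶜ.card < m.toNat := by omega
          rw [Nat.choose_eq_zero_of_lt hlt]
          simp
      · rw [if_neg (by omega)]
        have hlt : T.card < (i - m).toNat := by omega
        rw [Nat.choose_eq_zero_of_lt hlt]
        simp
    · have hFSeq : FS = ∅ := by
        rw [Finset.eq_empty_iff_forall_notMem]
        intro A hA
        simp only [hFS, Finset.mem_filter, Finset.mem_univ, true_and] at hA
        rcases not_and_or.mp hpos with h | h <;> omega
      rw [hFSeq, Finset.card_empty]
      unfold intChoose
      rcases not_and_or.mp hpos with h | h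
      · rw [if_neg (show ¬(0 ≤ m ∧ m ≤ (n : ℤ) - k) from fun hc => h hc.1)]
        simp
      · rw [if_neg (show ¬(0 ≤ k - (i - m) ∧ k - (i - m) ≤ k) by omega)]
        simp
end

section
/- Let n be a positive integer, X a ±1 sequence of length n with Hamming weight a = ω(X), and k an integer. Then there exists an integer i with 0 ≤ i ≤ a such that P_X(k) = n - 4a + 4i. In particular, n - P_X(k) is divisible by 4 for every k. -/
/-- The periodic autocorrelation of `X` at shift `k`:
`P_X(k) = Σ_{i=0}^{n-1} (X i) * (X (i + k))`, indices modulo `n`. -/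
def pac (n : ℕ) (X : ZMod n → ℤ) (k : ℤ) : ℤ :=
  ∑ i ∈ Finset.range n, X (i : ZMod n) * X ((i : ZMod n) + (k : ZMod n))

/-!
Writing `X i = 2 [X i = 1] - 1`, each product `X i * X (i + k)` expands into indicators, and
summing gives `P_X(k) = n - 2a - 2a + 4c`, where the second `a` counts the ones of the shifted
sequence and `c` is the number of `i` with `X i = X (i + k) = 1`. Since `c ≤ a`, the theorem
follows with `i = c`.
-/

open Finset

lemma mul_eq_of_eq_one_or_eq_neg_one {x y : ℤ} (hx : x = 1 ∨ x = -1) (hy : y = 1 ∨ y = -1) :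
    x * y = 1 - 2 * (if x = 1 then 1 else 0) - 2 * (if y = 1 then 1 else 0)
      + 4 * (if x = 1 ∧ y = 1 then 1 else 0) := by
  rcases hx with rfl | rfl <;> rcases hy with rfl | rfl <;> norm_num

theorem Fintype.sum_mul_eq_of_forall_eq_one_or_eq_neg_one {ι : Type*} [Fintype ι]
    {x y : ι → ℤ} (hx : ∀ i, x i = 1 ∨ x i = -1) (hy : ∀ i, y i = 1 ∨ y i = -1) :
    ∑ i, x i * y i = Fintype.card ι - 2 * #{i | x i = 1} - 2 * #{i | y i = 1}
      + 4 * #{i | x i = 1 ∧ y i = 1} := by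
  simp only [fun i => mul_eq_of_eq_one_or_eq_neg_one (hx i) (hy i), sum_add_distrib,
    sum_sub_distrib, ← mul_sum, sum_boole, sum_const, card_univ, nsmul_eq_mul, mul_one]

theorem card_filter_add_right {G : Type*} [AddGroup G] [Fintype G] (p : G → Prop)
    [DecidablePred p] (c : G) : #{i | p (i + c)} = #{i | p i} :=
  card_equiv (Equiv.addRight c) (by simp)

section

variable (n : ℕ) [NeZero n] (X : ZMod n → ℤ)

lemma wt_eq_card_filter : wt n X = #{i | X i = 1} := by
  rw [wt, ← Set.ncard_coe_finset]
  simp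

lemma pac_eq_sum_univ (k : ℤ) : pac n X k = ∑ i : ZMod n, X i * X (i + k) :=
  sum_nbij' (↑) ZMod.val (by simp) (fun j _ => mem_range.2 j.val_lt)
    (fun _ hi => ZMod.val_natCast_of_lt (mem_range.1 hi)) (fun j _ => ZMod.natCast_zmod_val j)
    (fun _ _ => rfl)

variable {n X}

lemma IsPM.pac_eq (hX : IsPM n X) (k : ℤ) :
    pac n X k = n - 4 * wt n X + 4 * #{i | X i = 1 ∧ X (i + k) = 1} := by
  rw [pac_eq_sum_univ, Fintype.sum_mul_eq_of_forall_eq_one_or_eq_neg_one hX (fun i => hX _),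
    card_filter_add_right (X · = 1), wt_eq_card_filter, ZMod.card]
  ring

lemma card_filter_and_le_wt (k : ℤ) : #{i | X i = 1 ∧ X (i + k) = 1} ≤ wt n X := by
  rw [wt_eq_card_filter]
  exact card_le_card (monotone_filter_right _ fun _ _ => And.left)

end

theorem stmt7 (n : ℕ) (hn : 0 < n) (X : ZMod n → ℤ) (hX : IsPM n X)
    (a : ℕ) (ha : a = wt n X) (k : ℤ) :
    (∃ i : ℕ, i ≤ a ∧ pac n X k = (n : ℤ) - 4 * a + 4 * i) ∧
      (4 : ℤ) ∣ ((n : ℤ) - pac n X k) := by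
  have : NeZero n := ⟨hn.ne'⟩
  subst ha
  have hpac := hX.pac_eq k
  refine ⟨⟨_, card_filter_and_le_wt k, hpac⟩, ⟨wt n X - #{i | X i = 1 ∧ X (i + k) = 1}, ?_⟩⟩
  rw [hpac]
  ring
end

section
/- Let m be an odd positive integer and let X be a ±1 sequence of length 4m² whose Hamming weight ω(X) is even. Then the periodic autocorrelation of X at shift 2m² is nonzero: P_X(2m²) ≠ 0. Consequently, X is not a row of a circulant Hadamard matrix of order 4m². -/
theorem stmt8 (m : ℕ) (hm : 0 < m) (hmodd : Odd m)
    (X : ZMod (4 * m ^ 2) → ℤ) (hX : IsPM (4 * m ^ 2) X)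
    (hw : Even (wt (4 * m ^ 2) X)) :
    pac (4 * m ^ 2) X (2 * (m : ℤ) ^ 2) ≠ 0 ∧
      ¬(∀ k : ℤ, ¬((4 * (m : ℤ) ^ 2) ∣ k) → pac (4 * m ^ 2) X k = 0) := by
  have hnpos : 0 < 4 * m ^ 2 := by positivity
  haveI : NeZero (4 * m ^ 2) := ⟨hnpos.ne'⟩
  set κ : ZMod (4 * m ^ 2) := ((2 * m ^ 2 : ℕ) : ZMod (4 * m ^ 2)) with hκ
  have hcastκ : ((2 * (m : ℤ) ^ 2 : ℤ) : ZMod (4 * m ^ 2)) = κ := by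
    rw [hκ]; push_cast; ring
  have hκκ : κ + κ = 0 := by
    rw [hκ, ← Nat.cast_add]
    have h4 : 2 * m ^ 2 + 2 * m ^ 2 = 4 * m ^ 2 := by ring
    rw [h4, ZMod.natCast_self]
  classical
  set a : ZMod (4 * m ^ 2) → ℤ := fun i => if X i = 1 then 1 else 0 with ha
  have hXa : ∀ i, X i = 2 * a i - 1 := by
    intro i
    rcases hX i with h | h <;> simp [ha, h]
  -- sum over range = sum over univ
  have L : ∀ g : ZMod (4 * m ^ 2) → ℤ,
      ∑ i ∈ Finset.range (4 * m ^ 2), g (i : ZMod (4 * m ^ 2))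
        = ∑ j : ZMod (4 * m ^ 2), g j := by
    intro g
    apply Finset.sum_bij
      (fun (i : ℕ) (_ : i ∈ Finset.range (4 * m ^ 2)) => (i : ZMod (4 * m ^ 2)))
    · intro i hi; exact Finset.mem_univ _
    · intro i hi j hj hij
      have hi' := Finset.mem_range.mp hi
      have hj' := Finset.mem_range.mp hj
      have := congrArg ZMod.val hij
      rwa [ZMod.val_cast_of_lt hi', ZMod.val_cast_of_lt hj'] at this
    · intro j _
      exact ⟨j.val, Finset.mem_range.mpr (ZMod.val_lt j), (ZMod.natCast_rightInverse j)⟩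
    · intro i hi; rfl
  -- doubling trick
  have hdouble : ∀ g : ZMod (4 * m ^ 2) → ℤ, (∀ i, g (i + κ) = g i) →
      ∑ i ∈ Finset.range (4 * m ^ 2), g (i : ZMod (4 * m ^ 2))
        = 2 * ∑ i ∈ Finset.range (2 * m ^ 2), g (i : ZMod (4 * m ^ 2)) := by
    intro g hg
    rw [show Finset.range (4 * m ^ 2) = Finset.range (2 * m ^ 2 + 2 * m ^ 2) by
      congr 1; ring, Finset.sum_range_add]
    have key : ∀ i : ℕ, g (((2 * m ^ 2 + i : ℕ) : ZMod (4 * m ^ 2))) = g (i : ZMod (4 * m ^ 2)) := by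
      intro i
      have : ((2 * m ^ 2 + i : ℕ) : ZMod (4 * m ^ 2)) = (i : ZMod (4 * m ^ 2)) + κ := by
        push_cast [hκ]; ring
      rw [this, hg]
    simp only [key]
    ring
  -- weight as a sum
  have hwt : ∑ j : ZMod (4 * m ^ 2), a j = (wt (4 * m ^ 2) X : ℤ) := by
    rw [ha, wt, Finset.sum_boole]
    congr 1
    rw [Set.ncard_eq_toFinset_card']
    congr 1
    ext i
    simp
  have hshift : ∑ j : ZMod (4 * m ^ 2), a (j + κ) = ∑ j : ZMod (4 * m ^ 2), a j :=
    Fintype.sum_equiv (Equiv.addRight κ) _ _ (fun j => rfl)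
  have hC : Even (∑ j : ZMod (4 * m ^ 2), a j * a (j + κ)) := by
    rw [← L (fun j => a j * a (j + κ))]
    rw [hdouble (fun j => a j * a (j + κ)) ?_]
    · exact even_two_mul _
    · intro i
      rw [add_assoc, hκκ, add_zero, mul_comm]
  -- main computation
  have hpac : pac (4 * m ^ 2) X (2 * (m : ℤ) ^ 2)
      = 4 * (∑ j : ZMod (4 * m ^ 2), a j * a (j + κ))
        - 4 * (wt (4 * m ^ 2) X : ℤ) + (4 * m ^ 2 : ℕ) := by
    rw [pac, hcastκ, L (fun i => X i * X (i + κ))]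
    have hterm : ∀ j : ZMod (4 * m ^ 2), X j * X (j + κ)
        = 4 * (a j * a (j + κ)) - 2 * a j - 2 * a (j + κ) + 1 := by
      intro j; rw [hXa j, hXa (j + κ)]; ring
    rw [Finset.sum_congr rfl (fun j _ => hterm j)]
    simp only [Finset.sum_add_distrib, Finset.sum_sub_distrib,
      Finset.sum_const, Finset.card_univ, ZMod.card, nsmul_eq_mul, mul_one]
    rw [← Finset.mul_sum, ← Finset.mul_sum, ← Finset.mul_sum, hshift, hwt]
    ring
  have hne : pac (4 * m ^ 2) X (2 * (m : ℤ) ^ 2) ≠ 0 := by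
    obtain ⟨c, hc⟩ := hC
    obtain ⟨w, hwweq⟩ := hw
    obtain ⟨t, ht⟩ := hmodd
    rw [hpac, hc, hwweq, ht]
    push_cast
    intro hcontra
    have h2 : 8 * (c - (w : ℤ) + 2 * ((t : ℤ) * (t : ℤ)) + 2 * (t : ℤ)) + 4 = 0 := by
      linear_combination hcontra
    set u : ℤ := c - (w : ℤ) + 2 * ((t : ℤ) * (t : ℤ)) + 2 * (t : ℤ) with hu
    omega
  refine ⟨hne, fun H => hne (H _ ?_)⟩
  intro hdvd
  have h1 : (0:ℤ) < 2 * (m : ℤ) ^ 2 := by positivity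
  have := Int.le_of_dvd h1 hdvd
  nlinarith [sq_nonneg ((m : ℤ))]
end

section
/- Let m be a positive integer and let X be a ±1 sequence of length 4m² such that P_X(k) = 0 for every k with 1 ≤ k ≤ 4m² - 1 (i.e., X is a row of a circulant Hadamard matrix of order 4m²). Then the Hamming weight of X equals 2m² - m or 2m² + m. -/
open Finset

theorem ZMod.sum_range_natCast {M : Type*} [AddCommMonoid M] (n : ℕ) [NeZero n]
    (f : ZMod n → M) : ∑ i ∈ range n, f i = ∑ a : ZMod n, f a :=
  sum_nbij' (↑) ZMod.val (by simp) (fun a _ => mem_range.mpr a.val_lt)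
    (fun _ hi => ZMod.val_cast_of_lt (mem_range.mp hi)) (fun a _ => ZMod.natCast_zmod_val a)
    (fun _ _ => rfl)

theorem sq_sum_eq_sum_sum_mul_add {G R : Type*} [AddCommGroup G] [Fintype G] [CommRing R]
    (X : G → R) : (∑ i, X i) ^ 2 = ∑ k, ∑ i, X i * X (i + k) := by
  rw [sq, sum_mul_sum]
  conv_rhs => rw [sum_comm]
  exact sum_congr rfl fun i _ =>
    (Fintype.sum_equiv (Equiv.addLeft i) (fun k => X i * X (i + k)) _ fun _ => rfl).symm

theorem pac_eq_sum (n : ℕ) [NeZero n] (X : ZMod n → ℤ) (k : ℤ) :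
    pac n X k = ∑ i : ZMod n, X i * X (i + k) :=
  ZMod.sum_range_natCast n fun i => X i * X (i + k)

namespace IsPM

variable {n : ℕ} {X : ZMod n → ℤ}

theorem mul_self (hX : IsPM n X) (i : ZMod n) : X i * X i = 1 := by
  rcases hX i with h | h <;> simp [h]

theorem pac_zero [NeZero n] (hX : IsPM n X) : pac n X 0 = n := by
  simp [pac_eq_sum, hX.mul_self]

theorem sum_eq [NeZero n] (hX : IsPM n X) : ∑ i, X i = 2 * (wt n X : ℤ) - n := by
  have hwt : wt n X = #{i | X i = 1} := by
    rw [wt, ← Set.ncard_coe_finset, coe_filter_univ]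
  rw [hwt, ← sum_filter_add_sum_filter_not univ (X · = 1),
    sum_congr rfl fun i hi => (mem_filter.mp hi).2,
    sum_congr rfl fun i hi => (hX i).resolve_left (mem_filter.mp hi).2]
  have hcard := card_filter_add_card_filter_not (s := (univ : Finset (ZMod n))) (X · = 1)
  rw [card_univ, ZMod.card] at hcard
  simp only [sum_const, nsmul_eq_mul, mul_one, mul_neg]
  omega

end IsPM

theorem sq_sum_eq_of_pac_eq_zero {n : ℕ} [NeZero n] {X : ZMod n → ℤ} (hX : IsPM n X)
    (hH : ∀ k : ℤ, 1 ≤ k → k ≤ (n : ℤ) - 1 → pac n X k = 0) :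
    (∑ i, X i) ^ 2 = n := by
  rw [sq_sum_eq_sum_sum_mul_add, sum_eq_single 0, ← hX.pac_zero, pac_eq_sum]
  · simp
  · intro k _ hk
    have hval : k.val ≠ 0 := (ZMod.val_ne_zero k).mpr hk
    have hlt := k.val_lt
    simpa [pac_eq_sum] using hH k.val (by omega) (by omega)
  · simp

theorem stmt10 (m : ℕ) (hm : 0 < m)
    (X : ZMod (4 * m ^ 2) → ℤ) (hX : IsPM (4 * m ^ 2) X)
    (hH : ∀ k : ℤ, 1 ≤ k → k ≤ 4 * (m : ℤ) ^ 2 - 1 → pac (4 * m ^ 2) X k = 0) :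
    (wt (4 * m ^ 2) X : ℤ) = 2 * (m : ℤ) ^ 2 - m ∨
      (wt (4 * m ^ 2) X : ℤ) = 2 * (m : ℤ) ^ 2 + m := by
  have : NeZero (4 * m ^ 2) := ⟨by positivity⟩
  have hsq := sq_sum_eq_of_pac_eq_zero hX (by push_cast; exact hH)
  rw [hX.sum_eq] at hsq
  have hw : (2 * (wt (4 * m ^ 2) X : ℤ) - 4 * m ^ 2) ^ 2 = (2 * m) ^ 2 := by
    push_cast at hsq; linear_combination hsq
  rcases sq_eq_sq_iff_eq_or_eq_neg.mp hw with h | h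
  · right; linarith
  · left; linarith
end

section
/- Let m be a positive integer and let X be a ±1 sequence of length 4m² such that P_X(k) = 0 for every k with 1 ≤ k ≤ 4m² - 1, and suppose ω(X) = 2m² - m. Let a = ω(B) be the Hamming weight of the first half B of X and b = ω(C) the Hamming weight of the second half C of X. Then b = 2m² - m - a and (m² - m)/2 ≤ a ≤ (3m² - m)/2. -/
/-- The first half of a ±1 sequence of length `2n`. -/
def firstHalf (n : ℕ) (X : ZMod (2 * n) → ℤ) : ZMod n → ℤ :=
  fun j => X ((j.val : ZMod (2 * n)))

/-- The second half of a ±1 sequence of length `2n`. -/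
def secondHalf (n : ℕ) (X : ZMod (2 * n) → ℤ) : ZMod n → ℤ :=
  fun j => X (((n + j.val : ℕ) : ZMod (2 * n)))

/-!
At shift `n = 2m²` the autocorrelation of `X` is twice the inner product of its halves `B` and `C`,
so `⟨B, C⟩ = 0`. For ±1 entries `|B j - C j| ≤ 1 - B j * C j`, hence `|∑ B - ∑ C| ≤ n`,
that is `|a - b| ≤ m²`. Together with `a + b = ω(X) = 2m² - m` this pins `a` between the two bounds.
-/

open Finset

lemma sum_range_natCast_eq_sum_univ_zmod {M : Type*} [AddCommMonoid M] (n : ℕ) [NeZero n]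
    (f : ZMod n → M) : ∑ i ∈ range n, f i = ∑ i, f i := by
  refine sum_nbij' (fun i => i) ZMod.val (by simp) (by simp [ZMod.val_lt]) ?_ (by simp) (by simp)
  intro i hi
  exact ZMod.val_natCast_of_lt (mem_range.mp hi)

lemma IsPM.sum_range_eq {n : ℕ} [NeZero n] {X : ZMod n → ℤ} (hX : IsPM n X) :
    ∑ i ∈ range n, X i = 2 * (wt n X : ℤ) - n := by
  classical
  have hwt : (wt n X : ℤ) = ∑ i, if X i = 1 then 1 else 0 := by
    rw [sum_boole, wt, Set.ncard_eq_toFinset_card', Set.toFinset_ofPred]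
  have hX' : ∀ i, X i = 2 * (if X i = 1 then 1 else 0) - 1 := fun i => by
    rcases hX i with h | h <;> simp [h]
  rw [sum_range_natCast_eq_sum_univ_zmod, hwt, mul_sum, sum_congr rfl fun i _ => hX' i,
    sum_sub_distrib]
  simp

lemma IsPM.firstHalf {n : ℕ} {X : ZMod (2 * n) → ℤ} (hX : IsPM (2 * n) X) :
    IsPM n (firstHalf n X) := fun _ => hX _

lemma IsPM.secondHalf {n : ℕ} {X : ZMod (2 * n) → ℤ} (hX : IsPM (2 * n) X) :
    IsPM n (secondHalf n X) := fun _ => hX _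

section Halves

variable {n : ℕ} (X : ZMod (2 * n) → ℤ)

lemma firstHalf_natCast {j : ℕ} (hj : j < n) : firstHalf n X j = X j := by
  simp [firstHalf, ZMod.val_natCast_of_lt hj]

lemma secondHalf_natCast {j : ℕ} (hj : j < n) : secondHalf n X j = X (n + j : ℕ) := by
  simp [secondHalf, ZMod.val_natCast_of_lt hj]

lemma sum_range_two_mul_eq_add_halves :
    ∑ i ∈ range (2 * n), X i =
      ∑ j ∈ range n, firstHalf n X j + ∑ j ∈ range n, secondHalf n X j := by
  rw [show range (2 * n) = range (n + n) by rw [two_mul], sum_range_add]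
  congr 1 <;> refine sum_congr rfl fun j hj => ?_
  · rw [firstHalf_natCast X (mem_range.mp hj)]
  · rw [secondHalf_natCast X (mem_range.mp hj)]

lemma pac_half : pac (2 * n) X n =
    2 * ∑ j ∈ range n, firstHalf n X j * secondHalf n X j := by
  have hwrap : ∀ j : ℕ, ((n + j : ℕ) : ZMod (2 * n)) + (n : ℤ) = j := fun j => by
    have h : ((2 * n : ℕ) : ZMod (2 * n)) = 0 := ZMod.natCast_self _
    push_cast at h ⊢
    linear_combination h
  rw [pac, show range (2 * n) = range (n + n) by rw [two_mul], sum_range_add,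
    two_mul (∑ j ∈ range n, _)]
  congr 1 <;> refine sum_congr rfl fun j hj => ?_
  · rw [firstHalf_natCast X (mem_range.mp hj), secondHalf_natCast X (mem_range.mp hj),
      Int.cast_natCast, Nat.cast_add, add_comm (n : ZMod (2 * n))]
  · rw [hwrap, firstHalf_natCast X (mem_range.mp hj), secondHalf_natCast X (mem_range.mp hj),
      mul_comm]

end Halves

lemma abs_sum_sub_sum_le_card_sub_sum_mul {ι : Type*} (s : Finset ι) {f g : ι → ℤ}
    (hf : ∀ i ∈ s, f i = 1 ∨ f i = -1) (hg : ∀ i ∈ s, g i = 1 ∨ g i = -1) :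
    |∑ i ∈ s, f i - ∑ i ∈ s, g i| ≤ #s - ∑ i ∈ s, f i * g i := by
  have hpt : ∀ i ∈ s, |f i - g i| ≤ 1 - f i * g i := fun i hi => by
    rcases hf i hi with h | h <;> rcases hg i hi with h' | h' <;> norm_num [h, h']
  calc |∑ i ∈ s, f i - ∑ i ∈ s, g i| = |∑ i ∈ s, (f i - g i)| := by rw [sum_sub_distrib]
    _ ≤ ∑ i ∈ s, |f i - g i| := abs_sum_le_sum_abs _ _
    _ ≤ ∑ i ∈ s, (1 - f i * g i) := sum_le_sum hpt
    _ = #s - ∑ i ∈ s, f i * g i := by simp [sum_sub_distrib]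

lemma wt_firstHalf_add_wt_secondHalf {n : ℕ} [NeZero n] {X : ZMod (2 * n) → ℤ}
    (hX : IsPM (2 * n) X) : wt n (firstHalf n X) + wt n (secondHalf n X) = wt (2 * n) X := by
  have h := sum_range_two_mul_eq_add_halves X
  rw [hX.sum_range_eq, hX.firstHalf.sum_range_eq, hX.secondHalf.sum_range_eq] at h
  push_cast at h
  omega

lemma abs_wt_firstHalf_sub_wt_secondHalf_le {n : ℕ} [NeZero n] {X : ZMod (2 * n) → ℤ}
    (hX : IsPM (2 * n) X) (hP : pac (2 * n) X n = 0) :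
    |2 * (wt n (firstHalf n X) : ℤ) - 2 * wt n (secondHalf n X)| ≤ n := by
  have hB := hX.firstHalf
  have hC := hX.secondHalf
  have h := abs_sum_sub_sum_le_card_sub_sum_mul (range n) (f := fun j => firstHalf n X j)
    (g := fun j => secondHalf n X j) (fun j _ => hB j) (fun j _ => hC j)
  have horth : ∑ j ∈ range n, firstHalf n X j * secondHalf n X j = 0 := by
    rw [pac_half] at hP
    omega
  rw [hB.sum_range_eq, hC.sum_range_eq, horth, card_range, sub_zero,
    sub_sub_sub_cancel_right] at h
  exact h

theorem stmt11 (m : ℕ) (hm : 0 < m)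
    (X : ZMod (2 * (2 * m ^ 2)) → ℤ) (hX : IsPM (2 * (2 * m ^ 2)) X)
    (hH : ∀ k : ℤ, 1 ≤ k → k ≤ 4 * (m : ℤ) ^ 2 - 1 → pac (2 * (2 * m ^ 2)) X k = 0)
    (hw : (wt (2 * (2 * m ^ 2)) X : ℤ) = 2 * (m : ℤ) ^ 2 - m)
    (a b : ℕ) (ha : a = wt (2 * m ^ 2) (firstHalf (2 * m ^ 2) X))
    (hb : b = wt (2 * m ^ 2) (secondHalf (2 * m ^ 2) X)) :
    (b : ℤ) = 2 * (m : ℤ) ^ 2 - m - a ∧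
      ((m : ℤ) ^ 2 - m) / 2 ≤ (a : ℤ) ∧ (a : ℤ) ≤ (3 * (m : ℤ) ^ 2 - m) / 2 := by
  have : NeZero (2 * m ^ 2) := ⟨by positivity⟩
  have hm2 : (1 : ℤ) ≤ (m : ℤ) ^ 2 := by exact_mod_cast Nat.one_le_pow _ _ hm
  have hP : pac (2 * (2 * m ^ 2)) X (2 * m ^ 2 : ℕ) = 0 :=
    hH _ (by push_cast; omega) (by push_cast; omega)
  have hsum := wt_firstHalf_add_wt_secondHalf hX
  have hdiff := abs_wt_firstHalf_sub_wt_secondHalf_le hX hP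
  rw [← ha, ← hb] at hsum hdiff
  rw [← hsum] at hw
  push_cast at hw hdiff
  rw [abs_le] at hdiff
  omega
end

section
/- Let m be a positive integer. There exists a ±1 sequence X of length 4m² with P_X(k) = 0 for every k with 1 ≤ k ≤ 4m² - 1 (a row of a circulant Hadamard matrix of order 4m²) if and only if there exists a subset D of ZMod (4m²) of cardinality 2m² - m such that for every nonzero g in ZMod (4m²), the number of ordered pairs (d₁, d₂) with d₁, d₂ ∈ D and d₁ - d₂ = g equals m² - m (i.e., a (4m², 2m² - m, m² - m)-difference set in the cyclic group of order 4m²). -/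
open Finset

lemma sum_range_eq_sum_univ (n : ℕ) [NeZero n] (f : ZMod n → ℤ) :
    ∑ i ∈ Finset.range n, f (i : ZMod n) = ∑ x : ZMod n, f x := by
  refine Finset.sum_nbij' (fun i => (i : ZMod n)) (fun (x : ZMod n) => x.val) ?_ ?_ ?_ ?_ ?_
  · intro a _; exact Finset.mem_univ _
  · intro x _; exact Finset.mem_range.mpr (ZMod.val_lt x)
  · intro a ha
    exact ZMod.val_cast_of_lt (Finset.mem_range.mp ha)
  · intro x _
    simp [ZMod.natCast_val, ZMod.cast_id]
  · intro a _; rfl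

lemma sum_shift (n : ℕ) [NeZero n] (f : ZMod n → ℤ) (k : ZMod n) :
    ∑ x : ZMod n, f (x + k) = ∑ x : ZMod n, f x :=
  Fintype.sum_equiv (Equiv.addRight k) _ _ (fun x => rfl)

lemma count_eq (n : ℕ) [NeZero n] (D : Finset (ZMod n)) (k : ZMod n) :
    ((Finset.univ : Finset (ZMod n)).filter (fun x => x ∈ D ∧ x + k ∈ D)).card
      = ((D ×ˢ D).filter fun p => p.1 - p.2 = k).card := by
  apply Finset.card_bij (fun x _ => (x + k, x))
  · intro a ha
    simp only [Finset.mem_filter, Finset.mem_univ, true_and] at ha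
    simp [Finset.mem_filter, Finset.mem_product, ha.1, ha.2]
  · intro a ha b hb h
    simpa using congrArg Prod.snd h
  · intro p hp
    simp only [Finset.mem_filter, Finset.mem_product] at hp
    refine ⟨p.2, ?_, ?_⟩
    · simp only [Finset.mem_filter, Finset.mem_univ, true_and]
      refine ⟨hp.1.2, ?_⟩
      have : p.2 + k = p.1 := by linear_combination -hp.2
      rw [this]; exact hp.1.1
    · have : p.2 + k = p.1 := by linear_combination -hp.2
      ext <;> simp [this]

lemma keyA (n : ℕ) [NeZero n] (D : Finset (ZMod n)) (k : ZMod n) :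
    ∑ x : ZMod n, (if x ∈ D then (-1:ℤ) else 1) * (if x + k ∈ D then (-1:ℤ) else 1)
      = (n : ℤ) - 4 * D.card + 4 * ((D ×ˢ D).filter fun p => p.1 - p.2 = k).card := by
  have hpt : ∀ x : ZMod n,
      (if x ∈ D then (-1:ℤ) else 1) * (if x + k ∈ D then (-1:ℤ) else 1)
        = 1 - 2 * (if x ∈ D then (1:ℤ) else 0) - 2 * (if x + k ∈ D then (1:ℤ) else 0)
          + 4 * ((if x ∈ D then (1:ℤ) else 0) * (if x + k ∈ D then (1:ℤ) else 0)) := by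
    intro x
    by_cases h1 : x ∈ D <;> by_cases h2 : x + k ∈ D <;> simp [h1, h2] <;> try ring
  rw [Finset.sum_congr rfl (fun x _ => hpt x)]
  have h1 : ∑ x : ZMod n, (if x ∈ D then (1:ℤ) else 0) = D.card := by
    simp [Finset.sum_boole]
  have h2 : ∑ x : ZMod n, (if x + k ∈ D then (1:ℤ) else 0) = D.card := by
    rw [sum_shift n (fun x => if x ∈ D then (1:ℤ) else 0) k]; exact h1
  have h3 : ∑ x : ZMod n,
      ((if x ∈ D then (1:ℤ) else 0) * (if x + k ∈ D then (1:ℤ) else 0))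
        = ((D ×ˢ D).filter fun p => p.1 - p.2 = k).card := by
    rw [← count_eq n D k]
    rw [Finset.card_filter]
    push_cast
    apply Finset.sum_congr rfl
    intro x _
    by_cases h1 : x ∈ D <;> by_cases h2 : x + k ∈ D <;> simp [h1, h2]
  simp only [Finset.sum_add_distrib, Finset.sum_sub_distrib, ← Finset.mul_sum, h1, h2, h3]
  simp [Finset.card_univ, ZMod.card]
  ring

lemma pac_formula (n : ℕ) [NeZero n] (D : Finset (ZMod n)) (k : ℤ) :
    pac n (fun i => if i ∈ D then (-1:ℤ) else 1) k
      = (n : ℤ) - 4 * D.card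
        + 4 * ((D ×ˢ D).filter fun p => p.1 - p.2 = (k : ZMod n)).card := by
  unfold pac
  rw [sum_range_eq_sum_univ n
    (fun x => (if x ∈ D then (-1:ℤ) else 1) * (if x + (k : ZMod n) ∈ D then (-1:ℤ) else 1))]
  exact keyA n D (k : ZMod n)

theorem stmt14 (m : ℕ) (hm : 0 < m) :
    (∃ X : ZMod (4 * m ^ 2) → ℤ, IsPM (4 * m ^ 2) X ∧
        ∀ k : ℤ, 1 ≤ k → k ≤ 4 * (m : ℤ) ^ 2 - 1 → pac (4 * m ^ 2) X k = 0) ↔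
      ∃ D : Finset (ZMod (4 * m ^ 2)), D.card = 2 * m ^ 2 - m ∧
        ∀ g : ZMod (4 * m ^ 2), g ≠ 0 →
          ((D ×ˢ D).filter fun p => p.1 - p.2 = g).card = m ^ 2 - m := by
  set n := 4 * m ^ 2 with hn
  have hnpos : 0 < n := by positivity
  haveI : NeZero n := ⟨hnpos.ne'⟩
  have hmn : m ≤ 2 * m ^ 2 := by nlinarith
  have hmm : m ≤ m ^ 2 := by nlinarith
  constructor
  · rintro ⟨X, hpm, hzero⟩
    -- autocorrelation as a function on ZMod n
    set P : ZMod n → ℤ := fun k => ∑ x : ZMod n, X x * X (x + k) with hP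
    have hP0 : P 0 = n := by
      simp only [hP, add_zero]
      have : ∀ x : ZMod n, X x * X x = 1 := by
        intro x; rcases hpm x with h | h <;> rw [h] <;> ring
      rw [Finset.sum_congr rfl (fun x _ => this x)]
      simp [Finset.card_univ, ZMod.card]
    have hPk : ∀ k : ZMod n, k ≠ 0 → P k = 0 := by
      intro k hk
      have hv1 : 1 ≤ k.val := Nat.one_le_iff_ne_zero.mpr (fun h => hk ((ZMod.val_eq_zero k).mp h))
      have hv2 : k.val < n := ZMod.val_lt k
      have hni : (n : ℤ) = 4 * (m:ℤ) ^ 2 := by rw [hn]; push_cast; ring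
      have := hzero (k.val : ℤ) (by exact_mod_cast hv1) (by rw [← hni]; omega)
      rw [pac] at this
      rw [sum_range_eq_sum_univ n (fun x => X x * X (x + ((k.val : ℤ) : ZMod n)))] at this
      have hc : (((k.val : ℤ)) : ZMod n) = k := by
        push_cast
        simp [ZMod.natCast_val, ZMod.cast_id]
      rw [hc] at this
      exact this
    set S : ℤ := ∑ x : ZMod n, X x with hS
    have hsum : ∑ k : ZMod n, P k = S ^ 2 := by
      simp only [hP]
      rw [Finset.sum_comm]
      have : ∀ x : ZMod n, ∑ k : ZMod n, X x * X (x + k) = X x * S := by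
        intro x
        rw [← Finset.mul_sum]
        congr 1
        rw [hS]
        exact Fintype.sum_equiv (Equiv.addLeft x) _ _ (fun k => rfl)
      rw [Finset.sum_congr rfl (fun x _ => this x), ← Finset.sum_mul]
      ring
    have hsum2 : ∑ k : ZMod n, P k = n := by
      rw [Finset.sum_eq_single_of_mem 0 (Finset.mem_univ 0)
        (fun b _ hb => hPk b hb), hP0]
    have hS2 : S ^ 2 = (2 * m : ℤ) ^ 2 := by
      rw [← hsum, hsum2, hn]; push_cast; ring
    have hScases : S = 2 * m ∨ S = -(2 * m) := by
      have h : (S - 2 * m) * (S + 2 * m) = 0 := by nlinarith [hS2]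
      rcases mul_eq_zero.mp h with h | h
      · left; linarith
      · right; linarith
    -- replace X by Y with sum = 2m
    obtain ⟨Y, hpmY, hzeroY, hSY⟩ :
        ∃ Y : ZMod n → ℤ, IsPM n Y ∧ (∀ k : ZMod n, k ≠ 0 → (∑ x : ZMod n, Y x * Y (x + k)) = 0)
          ∧ ∑ x : ZMod n, Y x = 2 * m := by
      rcases hScases with h | h
      · exact ⟨X, hpm, hPk, by rw [← hS, h]⟩
      · refine ⟨fun i => -X i, fun i => by rcases hpm i with h' | h' <;> simp [h'], ?_, ?_⟩
        · intro k hk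
          have := hPk k hk
          simp only [hP] at this
          simpa [neg_mul_neg] using this
        · show ∑ x : ZMod n, -X x = 2 * (m:ℤ)
          rw [Finset.sum_neg_distrib, ← hS, h, neg_neg]
    set D : Finset (ZMod n) := Finset.univ.filter (fun i => Y i = -1) with hD
    have hYeq : Y = fun i => if i ∈ D then (-1:ℤ) else 1 := by
      funext i
      rcases hpmY i with h | h <;> simp [hD, h]
    have hcardD : (D.card : ℤ) = 2 * m ^ 2 - m := by
      have h1 : ∑ x : ZMod n, Y x = (n : ℤ) - 2 * D.card := by
        rw [hYeq]
        have : ∀ x : ZMod n, (if x ∈ D then (-1:ℤ) else 1)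
            = 1 - 2 * (if x ∈ D then (1:ℤ) else 0) := by
          intro x; by_cases h : x ∈ D <;> simp [h]
        rw [Finset.sum_congr rfl (fun x _ => this x)]
        rw [Finset.sum_sub_distrib, ← Finset.mul_sum]
        simp [Finset.sum_boole, Finset.card_univ, ZMod.card]
      rw [hSY] at h1
      have : (n : ℤ) = 4 * m ^ 2 := by rw [hn]; push_cast; ring
      linarith [h1, this]
    refine ⟨D, ?_, ?_⟩
    · have : ((2 * m ^ 2 - m : ℕ) : ℤ) = 2 * m ^ 2 - m := by
        rw [Nat.cast_sub hmn]; push_cast; ring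
      exact_mod_cast hcardD.trans this.symm
    · intro g hg
      have h0 := hzeroY g hg
      rw [hYeq] at h0
      rw [keyA n D g] at h0
      have : ((((D ×ˢ D).filter fun p => p.1 - p.2 = g).card : ℤ)) = m ^ 2 - m := by
        have hni : (n : ℤ) = 4 * m ^ 2 := by rw [hn]; push_cast; ring
        rw [hni, hcardD] at h0
        linarith
      have h2 : ((m ^ 2 - m : ℕ) : ℤ) = m ^ 2 - m := by
        rw [Nat.cast_sub hmm]; push_cast; ring
      exact_mod_cast this.trans h2.symm
  · rintro ⟨D, hcard, hdiff⟩
    refine ⟨fun i => if i ∈ D then (-1:ℤ) else 1, fun i => by by_cases h : i ∈ D <;> simp [h], ?_⟩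
    intro k hk1 hk2
    have hkz : (k : ZMod n) ≠ 0 := by
      intro h
      have := (ZMod.intCast_zmod_eq_zero_iff_dvd k n).mp h
      have hle : (n : ℤ) ≤ k := Int.le_of_dvd (by linarith) this
      have : (n : ℤ) = 4 * m ^ 2 := by rw [hn]; push_cast; ring
      omega
    rw [pac_formula n D k]
    rw [hdiff (k : ZMod n) hkz, hcard]
    have hni : (n : ℤ) = 4 * m ^ 2 := by rw [hn]; push_cast; ring
    rw [hni, Nat.cast_sub hmn, Nat.cast_sub hmm]
    push_cast
    ring
end
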